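/- arXiv:1101.4437 — 5 statements merged into one kernel-verified Lean document; each statement's English description precedes it below -/
import Mathlib

section
/- Let F be a cumulative distribution function with quantile function F⁻(u) = inf{x : F(x) ≥ u}, let α ∈ (1,2), and let κ > 0 with κ < 1 and κ < 2/(α+1). If t^κ · sup_{t^{-κ} ≤ λ ≤ t^κ} |F⁻(1 - λ/t)/F⁻(1 - 1/t) - λ^{-1/α}| → 0 as t → ∞, then there exists a constant c > 0 such that F⁻(1 - 1/t) = c·t^{1/α}·(1 + o(t^{-κ(1+1/α)})) as t → ∞. -/
/-!
Put `ψ t = log F⁻(1 - 1/t) - (1/α) log t` and let `σ(t)` be the supremum in the hypothesis, so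
that `t^κ σ(t) → 0`. For `t ≤ s ≤ t^(1+κ)`, taking `λ = t/s` in that supremum bounds
`|ψ s - ψ t|` by `2 σ(t) (t/s)^(1/α)`. So `ψ` oscillates by `o(1)` on each block `[t, t^(1+κ)]`,
and moves by only `o(t^(-κ(1+1/α)))` across the whole block. Along the iterates
`s, s^(1+κ), s^((1+κ)^2), …` these moves are summable geometrically, so `ψ` converges to some `L`
with `ψ s - L = o(s^(-κ(1+1/α)))`; the small oscillation within blocks makes the limit independent
of `s`. Take `c = exp L`.

That `F⁻(1 - 1/t) > 0` also follows from the hypothesis: `F⁻` is monotone just below `1`, and a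
value `≤ 0` would make the deviation at `λ = 1` or at `λ = t^κ` at least `1/2`.
-/

open Filter Set Real Topology Asymptotics

noncomputable def powIter (κ s : ℝ) (n : ℕ) : ℝ := s ^ ((1 + κ) ^ n)

section powIter

variable {κ s : ℝ}

@[simp]
lemma powIter_zero : powIter κ s 0 = s := by simp [powIter]

lemma powIter_powIter (hs : 0 ≤ s) (n m : ℕ) :
    powIter κ (powIter κ s n) m = powIter κ s (n + m) := by
  simp only [powIter]
  rw [← rpow_mul hs, pow_add]

lemma powIter_succ (hs : 0 ≤ s) (n : ℕ) : powIter κ s (n + 1) = powIter κ s n ^ (1 + κ) := by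
  rw [← powIter_powIter hs, powIter, pow_one]

lemma powIter_le_powIter_left (hκ : 0 ≤ κ) (hs : 0 ≤ s) {s' : ℝ} (h : s ≤ s') (n : ℕ) :
    powIter κ s n ≤ powIter κ s' n :=
  rpow_le_rpow hs h (by positivity)

lemma self_le_powIter (hκ : 0 ≤ κ) (hs : 1 ≤ s) (n : ℕ) : s ≤ powIter κ s n :=
  self_le_rpow_of_one_le hs (one_le_pow₀ (by linarith))

lemma rpow_one_add_mul_le_powIter (hκ : 0 ≤ κ) (hs : 1 ≤ s) (n : ℕ) :
    s ^ (1 + n * κ) ≤ powIter κ s n :=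
  rpow_le_rpow_of_exponent_le hs (one_add_mul_le_pow (by linarith) n)

lemma tendsto_powIter_atTop (hκ : 0 < κ) (hs : 1 < s) : Tendsto (powIter κ s) atTop atTop := by
  refine tendsto_atTop_mono (rpow_one_add_mul_le_powIter hκ.le hs.le) ?_
  have hs0 : 0 < s := by linarith
  have h : (fun n : ℕ => s ^ (1 + n * κ)) = fun n => s * (s ^ κ) ^ n := by
    ext n
    rw [rpow_add hs0, rpow_one, ← rpow_natCast, ← rpow_mul hs0.le, mul_comm κ]
  rw [h]
  exact (tendsto_pow_atTop_atTop_of_one_lt (one_lt_rpow hs hκ)).const_mul_atTop hs0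

lemma powIter_rpow_neg_le (hκ : 0 ≤ κ) (hs : 1 ≤ s) {β : ℝ} (hβ : 0 ≤ β) (n : ℕ) :
    powIter κ s n ^ (-β) ≤ s ^ (-β) * (s ^ (-(β * κ))) ^ n := by
  have hs0 : 0 < s := by linarith
  calc powIter κ s n ^ (-β) ≤ (s ^ (1 + n * κ)) ^ (-β) :=
        rpow_le_rpow_of_nonpos (by positivity) (rpow_one_add_mul_le_powIter hκ hs n) (by linarith)
    _ = s ^ (-β) * (s ^ (-(β * κ))) ^ n := by
        rw [← rpow_mul hs0.le, ← rpow_natCast, ← rpow_mul hs0.le, ← rpow_add hs0]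
        ring_nf

end powIter

lemma exists_le_lt_succ_of_tendsto_atTop {α : Type*} [LinearOrder α] [NoMaxOrder α] {u : ℕ → α}
    (hu : Tendsto u atTop atTop) {s : α} (h0 : u 0 ≤ s) : ∃ n, u n ≤ s ∧ s < u (n + 1) := by
  by_contra! h
  have hle : ∀ n, u n ≤ s := fun n => by
    induction n with
    | zero => exact h0
    | succ n ih => exact h n ih
  obtain ⟨n, hn⟩ := (hu.eventually_gt_atTop s).exists
  exact (hle n).not_gt hn

section iteration

variable {ψ ε : ℝ → ℝ} {κ β T : ℝ}

lemma dist_comp_powIter_le (hκ : 0 ≤ κ) (hβ : 0 ≤ β) (hT : 1 ≤ T)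
    (hstep : ∀ t ≥ T, |ψ (t ^ (1 + κ)) - ψ t| ≤ ε t * t ^ (-β))
    {s η : ℝ} (hs : T ≤ s) (hη0 : 0 ≤ η) (hη : ∀ t ≥ s, ε t ≤ η) (n : ℕ) :
    dist (ψ (powIter κ s n)) (ψ (powIter κ s (n + 1))) ≤ η * s ^ (-β) * (s ^ (-(β * κ))) ^ n := by
  have hs1 : 1 ≤ s := hT.trans hs
  have hsn : s ≤ powIter κ s n := self_le_powIter hκ hs1 n
  rw [dist_comm, Real.dist_eq, powIter_succ (by linarith)]
  calc |ψ (powIter κ s n ^ (1 + κ)) - ψ (powIter κ s n)|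
      ≤ ε (powIter κ s n) * powIter κ s n ^ (-β) := hstep _ (hs.trans hsn)
    _ ≤ η * (s ^ (-β) * (s ^ (-(β * κ))) ^ n) :=
        mul_le_mul (hη _ hsn) (powIter_rpow_neg_le hκ hs1 hβ n) (rpow_nonneg (by linarith) _) hη0
    _ = η * s ^ (-β) * (s ^ (-(β * κ))) ^ n := by ring

lemma abs_sub_le_of_tendsto_comp_powIter (hκ : 0 ≤ κ) (hβ : 0 ≤ β) (hT : 1 ≤ T)
    (hstep : ∀ t ≥ T, |ψ (t ^ (1 + κ)) - ψ t| ≤ ε t * t ^ (-β))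
    {s η L : ℝ} (hs : T ≤ s) (hη0 : 0 ≤ η) (hη : ∀ t ≥ s, ε t ≤ η)
    (hr : s ^ (-(β * κ)) ≤ 1 / 2) (hL : Tendsto (fun n => ψ (powIter κ s n)) atTop (𝓝 L)) :
    |ψ s - L| ≤ 2 * η * s ^ (-β) := by
  have h := dist_le_of_le_geometric_of_tendsto₀ _ _ (by linarith)
    (dist_comp_powIter_le hκ hβ hT hstep hs hη0 hη) hL
  rw [powIter_zero, Real.dist_eq] at h
  have hs0 : 0 < s := by linarith
  calc |ψ s - L| ≤ η * s ^ (-β) / (1 - s ^ (-(β * κ))) := h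
    _ ≤ η * s ^ (-β) / (1 / 2) := by gcongr; linarith
    _ = 2 * η * s ^ (-β) := by ring

lemma tendsto_comp_powIter_of_mem_Icc (hκ : 0 < κ) (hT : 1 < T) (hε : Tendsto ε atTop (𝓝 0))
    (hbridge : ∀ t ≥ T, ∀ s ∈ Icc t (t ^ (1 + κ)), |ψ s - ψ t| ≤ ε t)
    {t s L : ℝ} (ht : T ≤ t) (hs : s ∈ Icc t (t ^ (1 + κ)))
    (hL : Tendsto (fun n => ψ (powIter κ t n)) atTop (𝓝 L)) :
    Tendsto (fun n => ψ (powIter κ s n)) atTop (𝓝 L) := by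
  have ht0 : 0 ≤ t := by linarith
  refine tendsto_of_tendsto_of_dist hL (squeeze_zero (fun _ => dist_nonneg) (fun n => ?_)
    (hε.comp (tendsto_powIter_atTop hκ (hT.trans_le ht))))
  rw [dist_comm, Real.dist_eq]
  refine hbridge _ (ht.trans (self_le_powIter hκ.le (by linarith) n)) _
    ⟨powIter_le_powIter_left hκ.le ht0 hs.1 n, ?_⟩
  calc powIter κ s n ≤ powIter κ (powIter κ t 1) n :=
        powIter_le_powIter_left hκ.le (ht0.trans hs.1) (by simpa [powIter] using hs.2) n
    _ = powIter κ t n ^ (1 + κ) := by rw [powIter_powIter ht0, add_comm, powIter_succ ht0]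

theorem exists_isLittleO_sub_of_abs_sub_le (hκ : 0 < κ) (hβ : 0 < β)
    (hε : Tendsto ε atTop (𝓝 0))
    (hbridge : ∀ᶠ t in atTop, ∀ s ∈ Icc t (t ^ (1 + κ)), |ψ s - ψ t| ≤ ε t)
    (hstep : ∀ᶠ t in atTop, |ψ (t ^ (1 + κ)) - ψ t| ≤ ε t * t ^ (-β)) :
    ∃ L, (fun t => ψ t - L) =o[atTop] fun t => t ^ (-β) := by
  have hr : ∀ᶠ t : ℝ in atTop, t ^ (-(β * κ)) ≤ 1 / 2 :=
    (tendsto_rpow_neg_atTop (mul_pos hβ hκ)).eventually_le_const (by norm_num)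
  obtain ⟨T, hT⟩ := eventually_atTop.1 ((eventually_gt_atTop 1).and
    (hr.and ((hε.eventually_le_const one_pos).and (hbridge.and hstep))))
  have hT1 : 1 < T := (hT T le_rfl).1
  have hr' := fun t (ht : t ≥ T) => (hT t ht).2.1
  have hε' := fun t (ht : t ≥ T) => (hT t ht).2.2.1
  have hbridge' := fun t (ht : t ≥ T) => (hT t ht).2.2.2.1
  have hstep' := fun t (ht : t ≥ T) => (hT t ht).2.2.2.2
  obtain ⟨L, hL⟩ := cauchySeq_tendsto_of_complete <| cauchySeq_of_le_geometric _ _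
    (by linarith [hr' T le_rfl]) (dist_comp_powIter_le hκ.le hβ.le hT1.le hstep' le_rfl
      zero_le_one hε')
  have hLs : ∀ s ≥ T, Tendsto (fun n => ψ (powIter κ s n)) atTop (𝓝 L) := by
    intro s hs
    have hT0 : 0 ≤ T := by linarith
    obtain ⟨n, hn, hn'⟩ :=
      exists_le_lt_succ_of_tendsto_atTop (tendsto_powIter_atTop hκ hT1) (by simpa using hs)
    refine tendsto_comp_powIter_of_mem_Icc hκ hT1 hε hbridge'
      (self_le_powIter hκ.le hT1.le n) ⟨hn, by rw [← powIter_succ hT0]; exact hn'.le⟩ ?_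
    simpa only [Function.comp_def, powIter_powIter hT0, add_comm n] using
      hL.comp (tendsto_add_atTop_nat n)
  refine ⟨L, isLittleO_iff.2 fun C hC => ?_⟩
  obtain ⟨S, hS⟩ := eventually_atTop.1 (hε.eventually_le_const (half_pos hC))
  filter_upwards [eventually_ge_atTop (max T S)] with s hs
  have hsT : T ≤ s := (le_max_left _ _).trans hs
  rw [Real.norm_eq_abs, Real.norm_of_nonneg (rpow_nonneg (by linarith) _)]
  calc |ψ s - L| ≤ 2 * (C / 2) * s ^ (-β) :=
        abs_sub_le_of_tendsto_comp_powIter hκ.le hβ.le hT1.le hstep' hsT (by positivity)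
          (fun t ht => hS t (((le_max_right _ _).trans hs).trans ht)) (hr' s hsT) (hLs s hsT)
    _ = C * s ^ (-β) := by ring

end iteration

lemma abs_log_le_two_mul_abs_sub_one {x : ℝ} (hx : |x - 1| ≤ 1 / 2) : |log x| ≤ 2 * |x - 1| := by
  have hx0 : 1 / 2 ≤ x := by linarith [(abs_le.1 hx).1]
  have hlow : 1 - x⁻¹ ≤ log x := one_sub_inv_le_log_of_pos (by linarith)
  have hup : log x ≤ x - 1 := log_le_sub_one_of_pos (by linarith)
  have hinv : -(2 * |x - 1|) ≤ 1 - x⁻¹ := by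
    rw [show 1 - x⁻¹ = (x - 1) / x by field_simp, le_div_iff₀ (by linarith)]
    nlinarith [neg_abs_le (x - 1), abs_nonneg (x - 1)]
  rw [abs_le]
  constructor <;> linarith [le_abs_self (x - 1), abs_nonneg (x - 1)]

noncomputable def powerDeviation (g : ℝ → ℝ) (p a b : ℝ) : ℝ :=
  sSup ((fun l => |g l / g 1 - l ^ (-p)|) '' Icc a b)

section powerDeviation

variable {g : ℝ → ℝ} {p a b : ℝ}

lemma abs_sub_le_powerDeviation (hg : AntitoneOn g (Icc a b)) (ha : 0 < a) (hp : 0 ≤ p)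
    {l : ℝ} (hl : l ∈ Icc a b) : |g l / g 1 - l ^ (-p)| ≤ powerDeviation g p a b := by
  refine le_csSup ⟨max |g b| |g a| / |g 1| + a ^ (-p), ?_⟩ (mem_image_of_mem _ hl)
  rintro _ ⟨x, hx, rfl⟩
  have hab : a ≤ b := hx.1.trans hx.2
  have hgx : |g x| ≤ max |g b| |g a| :=
    abs_le_max_abs_abs (hg hx ⟨hab, le_rfl⟩ hx.2) (hg ⟨le_rfl, hab⟩ hx hx.1)
  have hx0 : 0 < x := ha.trans_le hx.1
  calc |g x / g 1 - x ^ (-p)| ≤ |g x / g 1| + |x ^ (-p)| := abs_sub _ _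
    _ ≤ max |g b| |g a| / |g 1| + a ^ (-p) := by
      rw [abs_div, abs_of_pos (rpow_pos_of_pos hx0 _)]
      exact add_le_add (div_le_div_of_nonneg_right hgx (abs_nonneg _))
        (rpow_le_rpow_of_nonpos ha hx.1 (neg_nonpos.2 hp))

lemma powerDeviation_nonneg (hg : AntitoneOn g (Icc a b)) (ha : 0 < a) (hp : 0 ≤ p)
    (hab : a ≤ b) : 0 ≤ powerDeviation g p a b :=
  (abs_nonneg _).trans (abs_sub_le_powerDeviation hg ha hp ⟨le_rfl, hab⟩)

lemma pos_of_powerDeviation_lt (hg : AntitoneOn g (Icc a b)) (ha : 0 < a) (ha1 : a ≤ 1)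
    (hb1 : 1 ≤ b) (hp : 0 ≤ p) (hb : b ^ (-p) ≤ 1 / 2) (hdev : powerDeviation g p a b < 1 / 2) :
    0 < g 1 := by
  have h1 := abs_sub_le_powerDeviation hg ha hp ⟨ha1, hb1⟩
  by_contra! hg1
  rcases hg1.lt_or_eq with hneg | hzero
  · -- `g b ≤ g 1 < 0` puts the ratio at `λ = b` above `1`, far from `b ^ (-p) ≤ 1 / 2`
    have hb' := abs_sub_le_powerDeviation hg ha hp ⟨ha1.trans hb1, le_rfl⟩
    have hratio : 1 ≤ g b / g 1 :=
      (one_le_div_of_neg hneg).2 (hg ⟨ha1, hb1⟩ ⟨ha1.trans hb1, le_rfl⟩ hb1)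
    linarith [le_abs_self (g b / g 1 - b ^ (-p))]
  · rw [hzero, div_zero, one_rpow, zero_sub, abs_neg, abs_one] at h1
    linarith

lemma abs_log_sub_log_add_mul_log_le (hg : AntitoneOn g (Icc a b)) (ha : 0 < a) (hp : 0 ≤ p)
    (hg1 : 0 < g 1) (hdev : powerDeviation g p a b ≤ 1 / 2) {l : ℝ} (hl : l ∈ Icc a b)
    (hl1 : l ≤ 1) :
    |log (g l) - log (g 1) + p * log l| ≤ 2 * powerDeviation g p a b * l ^ p := by
  set σ := powerDeviation g p a b
  have hl0 : 0 < l := ha.trans_le hl.1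
  have hσ : |g l / g 1 - l ^ (-p)| ≤ σ := abs_sub_le_powerDeviation hg ha hp hl
  have hlp : l ^ p ≤ 1 := rpow_le_one hl0.le hl1 hp
  have hx : g l / g 1 * l ^ p - 1 = (g l / g 1 - l ^ (-p)) * l ^ p := by
    rw [sub_mul, rpow_neg hl0.le, inv_mul_cancel₀ (rpow_pos_of_pos hl0 p).ne']
  have hxσ : |g l / g 1 * l ^ p - 1| ≤ σ * l ^ p := by
    rw [hx, abs_mul, abs_of_pos (rpow_pos_of_pos hl0 p)]
    gcongr
  have hx2 : |g l / g 1 * l ^ p - 1| ≤ 1 / 2 :=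
    hxσ.trans ((mul_le_of_le_one_right ((abs_nonneg _).trans hσ) hlp).trans hdev)
  have hgl : 0 < g l := by
    have hpos : 0 < g l / g 1 * l ^ p := by linarith [(abs_le.1 hx2).1]
    exact (div_pos_iff_of_pos_right hg1).1 (pos_of_mul_pos_left hpos (rpow_nonneg hl0.le p))
  have hlog : log (g l / g 1 * l ^ p) = log (g l) - log (g 1) + p * log l := by
    rw [log_mul (div_pos hgl hg1).ne' (rpow_pos_of_pos hl0 p).ne', log_div hgl.ne' hg1.ne',
      log_rpow hl0]
  rw [← hlog]
  linarith [abs_log_le_two_mul_abs_sub_one hx2]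

end powerDeviation

lemma exists_monotoneOn_Ico_of_quantile {F Q : ℝ → ℝ} (hF : Monotone F)
    (hQ : ∀ u, Q u = sInf {x : ℝ | u ≤ F x}) : ∃ u₀ < 1, MonotoneOn Q (Ico u₀ 1) := by
  -- `sInf univ = sInf ∅ = 0` in `ℝ`: if `F ≥ 1` or `sup F < 1`, then `Q = 0` just below `1`.
  by_cases hge : ∀ x, 1 ≤ F x
  · have hzero : ∀ u < 1, Q u = 0 := fun u hu => by
      rw [hQ, show {x | u ≤ F x} = univ from eq_univ_of_forall fun x => hu.le.trans (hge x)]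
      exact Real.sInf_of_not_bddBelow not_bddBelow_univ
    exact ⟨0, one_pos, fun u hu v hv _ => by rw [hzero u hu.2, hzero v hv.2]⟩
  push Not at hge
  obtain ⟨x₀, hx₀⟩ := hge
  by_cases hsup : ∃ u₀ < 1, ∀ x, F x < u₀
  · obtain ⟨u₀, hu₀, hFu₀⟩ := hsup
    have hzero : ∀ u, u₀ ≤ u → Q u = 0 := fun u hu => by
      rw [hQ, show {x | u ≤ F x} = ∅ from
        eq_empty_of_forall_notMem fun x hx => (hFu₀ x).not_ge (hu.trans hx)]
      exact Real.sInf_empty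
    exact ⟨u₀, hu₀, fun u hu v hv _ => by rw [hzero u hu.1, hzero v hv.1]⟩
  push Not at hsup
  obtain ⟨u₀, hx₀u₀, hu₀⟩ := exists_between hx₀
  refine ⟨u₀, hu₀, fun u hu v hv huv => ?_⟩
  rw [hQ, hQ]
  refine csInf_le_csInf ⟨x₀, fun x (hx : u ≤ F x) => ?_⟩ (hsup v hv.2) fun x hx => huv.trans hx
  by_contra! hlt
  exact (hx₀u₀.trans_le hu.1).not_ge (hx.trans (hF hlt.le))

lemma eventually_antitoneOn_comp_one_sub_div {Q : ℝ → ℝ} {u₀ κ : ℝ} (hu₀ : u₀ < 1)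
    (hQ : MonotoneOn Q (Ico u₀ 1)) (hκ : κ < 1) :
    ∀ᶠ t : ℝ in atTop, AntitoneOn (fun l => Q (1 - l / t)) (Icc (t ^ (-κ)) (t ^ κ)) := by
  have hlim : Tendsto (fun t : ℝ => t ^ (κ - 1)) atTop (𝓝 0) := by
    simpa using tendsto_rpow_neg_atTop (sub_pos.2 hκ)
  filter_upwards [eventually_gt_atTop 0, hlim.eventually_le_const (sub_pos.2 hu₀)]
    with t ht hsmall
  have hmem : ∀ l ∈ Icc (t ^ (-κ)) (t ^ κ), 1 - l / t ∈ Ico u₀ 1 := fun l hl => by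
    have hl0 : 0 < l / t := div_pos ((rpow_pos_of_pos ht _).trans_le hl.1) ht
    have hlt : l / t ≤ t ^ (κ - 1) := by
      rw [rpow_sub ht, rpow_one]
      gcongr
      exact hl.2
    constructor <;> linarith
  intro l hl l' hl' hll'
  exact hQ (hmem l' hl') (hmem l hl) (by gcongr)

noncomputable def quantileDeviation (Q : ℝ → ℝ) (p κ t : ℝ) : ℝ :=
  powerDeviation (fun l => Q (1 - l / t)) p (t ^ (-κ)) (t ^ κ)

noncomputable def logScaledQuantile (Q : ℝ → ℝ) (p t : ℝ) : ℝ :=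
  log (Q (1 - 1 / t)) - p * log t

section quantile

variable {Q : ℝ → ℝ} {p κ : ℝ}

lemma exp_logScaledQuantile {t : ℝ} (hQt : 0 < Q (1 - 1 / t)) (ht : 0 < t) :
    exp (logScaledQuantile Q p t) = Q (1 - 1 / t) / t ^ p := by
  rw [logScaledQuantile, exp_sub, exp_log hQt, ← log_rpow ht, exp_log (by positivity)]

lemma abs_logScaledQuantile_sub_le (hp : 0 ≤ p) (hκ : 0 ≤ κ) {t : ℝ} (ht : 1 ≤ t)
    (hQ : AntitoneOn (fun l => Q (1 - l / t)) (Icc (t ^ (-κ)) (t ^ κ)))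
    (hQt : 0 < Q (1 - 1 / t)) (hdev : quantileDeviation Q p κ t ≤ 1 / 2)
    {s : ℝ} (hs : s ∈ Icc t (t ^ (1 + κ))) :
    |logScaledQuantile Q p s - logScaledQuantile Q p t| ≤
      2 * quantileDeviation Q p κ t * (t / s) ^ p := by
  have ht0 : 0 < t := by linarith
  have hs0 : 0 < s := ht0.trans_le hs.1
  have hts1 : t / s ≤ 1 := (div_le_one hs0).2 hs.1
  have hmem : t / s ∈ Icc (t ^ (-κ)) (t ^ κ) := by
    refine ⟨?_, hts1.trans (one_le_rpow ht hκ)⟩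
    calc t ^ (-κ) = t / t ^ (1 + κ) := by rw [rpow_add ht0, rpow_one, rpow_neg ht0.le]; field_simp
      _ ≤ t / s := by gcongr; exact hs.2
  have h := abs_log_sub_log_add_mul_log_le hQ (rpow_pos_of_pos ht0 _) hp hQt hdev hmem hts1
  rw [show t / s / t = 1 / s by field_simp, log_div ht0.ne' hs0.ne'] at h
  rw [quantileDeviation]
  convert h using 2
  simp only [logScaledQuantile]
  ring

variable (hp : 0 < p) (hκ0 : 0 < κ) (hκ1 : κ < 1) {u₀ : ℝ} (hu₀ : u₀ < 1)
  (hQ : MonotoneOn Q (Ico u₀ 1))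
  (hdev : Tendsto (fun t => t ^ κ * quantileDeviation Q p κ t) atTop (𝓝 0))
include hp hκ0 hκ1 hu₀ hQ hdev

lemma eventually_quantile_regular :
    ∀ᶠ t : ℝ in atTop, 1 ≤ t ∧ AntitoneOn (fun l => Q (1 - l / t)) (Icc (t ^ (-κ)) (t ^ κ)) ∧
      0 < Q (1 - 1 / t) ∧ 0 ≤ quantileDeviation Q p κ t ∧ quantileDeviation Q p κ t < 1 / 2 := by
  have hsmall : ∀ᶠ t : ℝ in atTop, t ^ (-(κ * p)) ≤ 1 / 2 :=
    (tendsto_rpow_neg_atTop (mul_pos hκ0 hp)).eventually_le_const (by norm_num)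
  filter_upwards [eventually_ge_atTop 1, eventually_antitoneOn_comp_one_sub_div hu₀ hQ hκ1,
    hsmall, hdev.eventually_lt_const (by norm_num : (0 : ℝ) < 1 / 2)] with t ht hanti hb hd
  have ha : 0 < t ^ (-κ) := rpow_pos_of_pos (by linarith) _
  have ha1 : t ^ (-κ) ≤ 1 := rpow_le_one_of_one_le_of_nonpos ht (by linarith)
  have hb1 : 1 ≤ t ^ κ := one_le_rpow ht hκ0.le
  have h0 : 0 ≤ quantileDeviation Q p κ t := powerDeviation_nonneg hanti ha hp.le (ha1.trans hb1)
  have hlt : quantileDeviation Q p κ t < 1 / 2 := (le_mul_of_one_le_left h0 hb1).trans_lt hd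
  refine ⟨ht, hanti, pos_of_powerDeviation_lt hanti ha ha1 hb1 hp.le ?_ hlt, h0, hlt⟩
  rwa [← rpow_mul (by linarith), ← neg_mul_eq_mul_neg]

lemma eventually_abs_logScaledQuantile_sub_le :
    ∀ᶠ t : ℝ in atTop, ∀ s ∈ Icc t (t ^ (1 + κ)),
      |logScaledQuantile Q p s - logScaledQuantile Q p t| ≤
        2 * (t ^ κ * quantileDeviation Q p κ t) := by
  filter_upwards [eventually_quantile_regular hp hκ0 hκ1 hu₀ hQ hdev]
    with t ⟨ht, hanti, hQt, h0, hlt⟩ s hs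
  have hs0 : 0 < s := by linarith [hs.1]
  calc _ ≤ 2 * quantileDeviation Q p κ t * (t / s) ^ p :=
        abs_logScaledQuantile_sub_le hp.le hκ0.le ht hanti hQt hlt.le hs
    _ ≤ 2 * quantileDeviation Q p κ t * 1 := by
        gcongr
        exact rpow_le_one (by positivity) ((div_le_one hs0).2 hs.1) hp.le
    _ ≤ 2 * (t ^ κ * quantileDeviation Q p κ t) := by
        nlinarith [one_le_rpow ht hκ0.le]

lemma eventually_abs_logScaledQuantile_rpow_sub_le :
    ∀ᶠ t : ℝ in atTop,
      |logScaledQuantile Q p (t ^ (1 + κ)) - logScaledQuantile Q p t| ≤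
        2 * (t ^ κ * quantileDeviation Q p κ t) * t ^ (-(κ * (1 + p))) := by
  filter_upwards [eventually_quantile_regular hp hκ0 hκ1 hu₀ hQ hdev]
    with t ⟨ht, hanti, hQt, _, hlt⟩
  have ht0 : 0 < t := by linarith
  have hs : t ^ (1 + κ) ∈ Icc t (t ^ (1 + κ)) :=
    ⟨self_le_rpow_of_one_le ht (by linarith), le_rfl⟩
  have hexp : t ^ κ * t ^ (-(κ * (1 + p))) = (t / t ^ (1 + κ)) ^ p := by
    rw [← rpow_add ht0, rpow_add ht0 1, rpow_one, div_mul_cancel_left₀ ht0.ne', ← rpow_neg_one,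
      ← rpow_mul ht0.le, ← rpow_mul ht0.le]
    congr 1
    ring
  refine (abs_logScaledQuantile_sub_le hp.le hκ0.le ht hanti hQt hlt.le hs).trans_eq ?_
  rw [← hexp]
  ring

end quantile

lemma isBigO_exp_sub_one {ι : Type*} {l : Filter ι} {f : ι → ℝ} (hf : Tendsto f l (𝓝 0)) :
    (fun x => exp (f x) - 1) =O[l] f :=
  IsBigO.of_bound 2 <| (hf.eventually (Metric.closedBall_mem_nhds 0 one_pos)).mono
    fun x hx => by simpa only [Real.norm_eq_abs] using
      abs_exp_sub_one_le (by simpa [Metric.mem_closedBall] using hx)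

theorem stmt0_general (F : ℝ → ℝ) (hF : Monotone F)
    (Finv : ℝ → ℝ) (hFinv : ∀ u, Finv u = sInf {x : ℝ | u ≤ F x})
    (α κ : ℝ) (hα1 : 1 < α)
    (hκ0 : 0 < κ) (hκ1 : κ < 1)
    (hyp : Tendsto
      (fun t : ℝ => t ^ κ *
        sSup ((fun l : ℝ => |Finv (1 - l / t) / Finv (1 - 1 / t) - l ^ (-(1 / α))|) ''
          Icc (t ^ (-κ)) (t ^ κ)))
      atTop (nhds 0)) :
    ∃ c : ℝ, 0 < c ∧ ∃ δ : ℝ → ℝ,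
      (δ =o[atTop] fun t : ℝ => t ^ (-(κ * (1 + 1 / α)))) ∧
      ∀ᶠ t : ℝ in atTop, Finv (1 - 1 / t) = c * t ^ (1 / α) * (1 + δ t) := by
  have hp : 0 < 1 / α := by positivity
  have hdev : Tendsto (fun t => t ^ κ * quantileDeviation Finv (1 / α) κ t) atTop (𝓝 0) := hyp
  obtain ⟨u₀, hu₀, hmono⟩ := exists_monotoneOn_Ico_of_quantile hF hFinv
  obtain ⟨L, hL⟩ := exists_isLittleO_sub_of_abs_sub_le hκ0 (by positivity)
    (by simpa using hdev.const_mul 2)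
    (eventually_abs_logScaledQuantile_sub_le hp hκ0 hκ1 hu₀ hmono hdev)
    (eventually_abs_logScaledQuantile_rpow_sub_le hp hκ0 hκ1 hu₀ hmono hdev)
  refine ⟨exp L, exp_pos L, fun t => exp (logScaledQuantile Finv (1 / α) t - L) - 1,
    (isBigO_exp_sub_one (hL.trans_tendsto (tendsto_rpow_neg_atTop (by positivity)))).trans_isLittleO
      hL, ?_⟩
  filter_upwards [eventually_quantile_regular hp hκ0 hκ1 hu₀ hmono hdev, eventually_gt_atTop 0]
    with t ⟨_, _, hQt, _⟩ ht
  rw [add_sub_cancel, exp_sub, exp_logScaledQuantile hQt ht]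
  field_simp

/-- If `t^κ · sup_{t^{-κ} ≤ λ ≤ t^κ} |F⁻(1-λ/t)/F⁻(1-1/t) - λ^{-1/α}| → 0`
as `t → ∞`, then `F⁻(1-1/t) = c t^{1/α}(1 + o(t^{-κ(1+1/α)}))` for some `c > 0`. -/
theorem stmt0 (F : ℝ → ℝ) (hF : Monotone F)
    (Finv : ℝ → ℝ) (hFinv : ∀ u, Finv u = sInf {x : ℝ | u ≤ F x})
    (α κ : ℝ) (hα1 : 1 < α) (hα2 : α < 2)
    (hκ0 : 0 < κ) (hκ1 : κ < 1) (hκ2 : κ < 2 / (α + 1))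
    (hyp : Tendsto
      (fun t : ℝ => t ^ κ *
        sSup ((fun l : ℝ => |Finv (1 - l / t) / Finv (1 - 1 / t) - l ^ (-(1 / α))|) ''
          Icc (t ^ (-κ)) (t ^ κ)))
      atTop (nhds 0)) :
    ∃ c : ℝ, 0 < c ∧ ∃ δ : ℝ → ℝ,
      (δ =o[atTop] fun t : ℝ => t ^ (-(κ * (1 + 1 / α)))) ∧
      ∀ᶠ t : ℝ in atTop, Finv (1 - 1 / t) = c * t ^ (1 / α) * (1 + δ t) :=
  stmt0_general F hF Finv hFinv α κ hα1 hκ0 hκ1 hyp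
end

section
/- Let α ∈ (1,2), κ > 0 with κ < 1 and κ < 2/(α+1), and c > 0. If F⁻(1 - 1/t) = c·t^{1/α}·(1 + o(t^{-κ(1+1/α)})) as t → ∞, then t^κ · sup_{t^{-κ} ≤ λ ≤ t^κ} |F⁻(1 - λ/t)/F⁻(1 - 1/t) - λ^{-1/α}| → 0 as t → ∞. -/
/-! Write `Q s := F⁻(1 - 1/s)`, so that `F⁻(1 - λ/t) = Q(t/λ)` and, with `ρ = 1/α`,
`Q(t/λ)/Q(t) - λ^{-ρ} = λ^{-ρ} (δ(t/λ) - δ(t)) / (1 + δ(t))`.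
Since `κ < 1`, `t/λ ≥ t^{1-κ} → ∞` uniformly on the window `t^{-κ} ≤ λ ≤ t^κ`, so both remainders
obey `|δ(s)| ≤ η s^{-κ(1+ρ)}` there. The condition `κ < 2/(α+1)` is exactly what makes
`λ^{-ρ} (t/λ)^{-κ(1+ρ)} ≤ t^{-κ}` on the whole window, and `λ^{-ρ} t^{-κ(1+ρ)} ≤ t^{-κ}` always holds,
so the supremum is `o(t^{-κ})`. -/

open Filter Set Asymptotics Topology

lemma rpow_le_rpow_mul_abs_of_mem_Icc {t κ l : ℝ} (ht : 0 < t)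
    (hl : l ∈ Icc (t ^ (-κ)) (t ^ κ)) (γ : ℝ) : l ^ γ ≤ t ^ (κ * |γ|) := by
  have hl0 : 0 < l := (Real.rpow_pos_of_pos ht _).trans_le hl.1
  rcases le_or_gt 0 γ with hγ | hγ
  · calc l ^ γ ≤ (t ^ κ) ^ γ := Real.rpow_le_rpow hl0.le hl.2 hγ
      _ = t ^ (κ * |γ|) := by rw [← Real.rpow_mul ht.le, abs_of_nonneg hγ]
  · calc l ^ γ ≤ (t ^ (-κ)) ^ γ := Real.rpow_le_rpow_of_nonpos (Real.rpow_pos_of_pos ht _) hl.1 hγ.le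
      _ = t ^ (κ * |γ|) := by rw [← Real.rpow_mul ht.le, abs_of_neg hγ]; ring_nf

lemma rpow_neg_mul_rpow_neg_le {t κ ρ l : ℝ} (ht : 0 < t) (hρ : 0 ≤ ρ)
    (hl : l ∈ Icc (t ^ (-κ)) (t ^ κ)) : l ^ (-ρ) * t ^ (-(κ * (1 + ρ))) ≤ t ^ (-κ) :=
  calc l ^ (-ρ) * t ^ (-(κ * (1 + ρ))) ≤ t ^ (κ * |-ρ|) * t ^ (-(κ * (1 + ρ))) := by
        gcongr; exact rpow_le_rpow_mul_abs_of_mem_Icc ht hl _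
    _ = t ^ (-κ) := by rw [abs_neg, abs_of_nonneg hρ, ← Real.rpow_add ht]; ring_nf

lemma rpow_neg_mul_div_rpow_neg_le {t κ ρ l : ℝ} (ht : 1 ≤ t) (hκ : 0 ≤ κ) (hρ : 0 ≤ ρ)
    (hκρ : κ * (1 + ρ) ≤ 2 * ρ) (hl : l ∈ Icc (t ^ (-κ)) (t ^ κ)) :
    l ^ (-ρ) * (t / l) ^ (-(κ * (1 + ρ))) ≤ t ^ (-κ) := by
  have ht0 : 0 < t := one_pos.trans_le ht
  have hl0 : 0 < l := (Real.rpow_pos_of_pos ht0 _).trans_le hl.1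
  have hexp : |κ * (1 + ρ) - ρ| ≤ ρ := abs_le.2 ⟨by nlinarith, by linarith⟩
  calc l ^ (-ρ) * (t / l) ^ (-(κ * (1 + ρ)))
      = t ^ (-(κ * (1 + ρ))) * l ^ (κ * (1 + ρ) - ρ) := by
        rw [Real.div_rpow ht0.le hl0.le, Real.rpow_sub hl0, Real.rpow_neg hl0.le ρ,
          Real.rpow_neg hl0.le (κ * (1 + ρ))]
        field_simp
    _ ≤ t ^ (-(κ * (1 + ρ))) * t ^ (κ * ρ) := by
        gcongr
        exact (rpow_le_rpow_mul_abs_of_mem_Icc ht0 hl _).trans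
          (Real.rpow_le_rpow_of_exponent_le ht (mul_le_mul_of_nonneg_left hexp hκ))
    _ = t ^ (-κ) := by rw [← Real.rpow_add ht0]; ring_nf

lemma abs_div_sub_rpow_le {c t l ρ a b : ℝ} (hc : c ≠ 0) (ht : 0 < t) (hl : 0 < l)
    (ha : |a| ≤ 1 / 2) :
    |c * (t / l) ^ ρ * (1 + b) / (c * t ^ ρ * (1 + a)) - l ^ (-ρ)|
      ≤ 2 * (l ^ (-ρ) * |b| + l ^ (-ρ) * |a|) := by
  have ha0 : 1 / 2 ≤ 1 + a := by linarith [(abs_le.1 ha).1]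
  have hlρ : 0 < l ^ (-ρ) := Real.rpow_pos_of_pos hl _
  have hidentity : c * (t / l) ^ ρ * (1 + b) / (c * t ^ ρ * (1 + a)) - l ^ (-ρ)
      = l ^ (-ρ) * (b - a) / (1 + a) := by
    have htρ : t ^ ρ ≠ 0 := (Real.rpow_pos_of_pos ht _).ne'
    rw [Real.div_rpow ht.le hl.le, Real.rpow_neg hl.le]
    field_simp
    ring
  calc |c * (t / l) ^ ρ * (1 + b) / (c * t ^ ρ * (1 + a)) - l ^ (-ρ)|
      = l ^ (-ρ) * |b - a| / (1 + a) := by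
        rw [hidentity, abs_div, abs_mul, abs_of_pos hlρ, abs_of_pos (show 0 < 1 + a by linarith)]
    _ ≤ l ^ (-ρ) * (|b| + |a|) / (1 / 2) := by
        gcongr
        exact abs_sub _ _
    _ = 2 * (l ^ (-ρ) * |b| + l ^ (-ρ) * |a|) := by ring

lemma eventually_forall_mem_Icc_div {P : ℝ → Prop} {κ : ℝ} (hP : ∀ᶠ s in atTop, P s)
    (hκ : κ < 1) : ∀ᶠ t in atTop, ∀ l ∈ Icc (t ^ (-κ)) (t ^ κ), P (t / l) := by
  obtain ⟨M, hM⟩ := eventually_atTop.1 hP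
  filter_upwards [eventually_gt_atTop 0,
    (tendsto_rpow_atTop (sub_pos.2 hκ)).eventually_ge_atTop M] with t ht htM l hl
  have hl0 : 0 < l := (Real.rpow_pos_of_pos ht _).trans_le hl.1
  refine hM _ (htM.trans ?_)
  calc t ^ (1 - κ) = t / t ^ κ := by rw [Real.rpow_sub ht, Real.rpow_one]
    _ ≤ t / l := div_le_div_of_nonneg_left ht.le hl0 hl.2

theorem isLittleO_sSup_abs_div_sub_rpow {Q δ : ℝ → ℝ} {ρ κ c : ℝ} (hρ : 0 ≤ ρ) (hκ0 : 0 < κ)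
    (hκ1 : κ < 1) (hκρ : κ * (1 + ρ) ≤ 2 * ρ) (hc : c ≠ 0)
    (hδ : δ =o[atTop] fun s => s ^ (-(κ * (1 + ρ))))
    (hQ : ∀ᶠ s in atTop, Q s = c * s ^ ρ * (1 + δ s)) :
    (fun t => sSup ((fun l => |Q (t / l) / Q t - l ^ (-ρ)|) '' Icc (t ^ (-κ)) (t ^ κ)))
      =o[atTop] fun t => t ^ (-κ) := by
  refine isLittleO_iff.2 fun η hη => ?_
  have hδ0 : Tendsto δ atTop (𝓝 0) := hδ.trans_tendsto (tendsto_rpow_neg_atTop (by positivity))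
  have hgood : ∀ᶠ s in atTop,
      |δ s| ≤ η / 4 * s ^ (-(κ * (1 + ρ))) ∧ Q s = c * s ^ ρ * (1 + δ s) := by
    filter_upwards [hδ.bound (by positivity : 0 < η / 4), hQ, eventually_gt_atTop 0]
      with s hs hQs hs0
    rw [Real.norm_eq_abs, Real.norm_of_nonneg (Real.rpow_pos_of_pos hs0 _).le] at hs
    exact ⟨hs, hQs⟩
  filter_upwards [eventually_forall_mem_Icc_div hgood hκ1, hgood, eventually_ge_atTop 1,
    (hδ0.abs.eventually (ge_mem_nhds (by norm_num : |(0 : ℝ)| < 1 / 2)))]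
    with t hwindow ⟨hδt, hQt⟩ ht hhalf
  have ht0 : 0 < t := one_pos.trans_le ht
  have hbound : ∀ l ∈ Icc (t ^ (-κ)) (t ^ κ), |Q (t / l) / Q t - l ^ (-ρ)| ≤ η * t ^ (-κ) := by
    intro l hl
    have hl0 : 0 < l := (Real.rpow_pos_of_pos ht0 _).trans_le hl.1
    obtain ⟨hδl, hQl⟩ := hwindow l hl
    have hlρ : 0 ≤ l ^ (-ρ) := (Real.rpow_pos_of_pos hl0 _).le
    calc |Q (t / l) / Q t - l ^ (-ρ)|
        ≤ 2 * (l ^ (-ρ) * |δ (t / l)| + l ^ (-ρ) * |δ t|) := by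
          rw [hQl, hQt]; exact abs_div_sub_rpow_le hc ht0 hl0 hhalf
      _ ≤ 2 * (l ^ (-ρ) * (η / 4 * (t / l) ^ (-(κ * (1 + ρ))))
            + l ^ (-ρ) * (η / 4 * t ^ (-(κ * (1 + ρ))))) := by gcongr
      _ = η / 2 * (l ^ (-ρ) * (t / l) ^ (-(κ * (1 + ρ))) + l ^ (-ρ) * t ^ (-(κ * (1 + ρ)))) := by
          ring
      _ ≤ η / 2 * (t ^ (-κ) + t ^ (-κ)) := by
          gcongr
          exacts [rpow_neg_mul_div_rpow_neg_le ht hκ0.le hρ hκρ hl, rpow_neg_mul_rpow_neg_le ht0 hρ hl]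
      _ = η * t ^ (-κ) := by ring
  have hsup0 : 0 ≤ sSup ((fun l => |Q (t / l) / Q t - l ^ (-ρ)|) '' Icc (t ^ (-κ)) (t ^ κ)) :=
    Real.sSup_nonneg (by rintro _ ⟨l, -, rfl⟩; exact abs_nonneg _)
  rw [Real.norm_of_nonneg hsup0, Real.norm_of_nonneg (Real.rpow_pos_of_pos ht0 _).le]
  exact Real.sSup_le (by rintro _ ⟨l, hl, rfl⟩; exact hbound l hl) (by positivity)

theorem stmt1_general
    (Finv : ℝ → ℝ)
    (α κ c : ℝ) (hα1 : 1 < α)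
    (hκ0 : 0 < κ) (hκ1 : κ < 1) (hκ2 : κ < 2 / (α + 1)) (hc : 0 < c)
    (hyp : ∃ δ : ℝ → ℝ,
      (δ =o[atTop] fun t : ℝ => t ^ (-(κ * (1 + 1 / α)))) ∧
      ∀ᶠ t : ℝ in atTop, Finv (1 - 1 / t) = c * t ^ (1 / α) * (1 + δ t)) :
    Tendsto
      (fun t : ℝ => t ^ κ *
        sSup ((fun l : ℝ => |Finv (1 - l / t) / Finv (1 - 1 / t) - l ^ (-(1 / α))|) ''
          Icc (t ^ (-κ)) (t ^ κ)))
      atTop (nhds 0) := by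
  obtain ⟨δ, hδ, hQ⟩ := hyp
  have hα : 0 < α := by linarith
  have hκα : κ * (1 + 1 / α) ≤ 2 * (1 / α) := by
    have h : κ * (α + 1) < 2 := (lt_div_iff₀ (by linarith)).1 hκ2
    rw [show κ * (1 + 1 / α) = κ * (α + 1) * (1 / α) by field_simp]
    exact mul_le_mul_of_nonneg_right h.le (by positivity)
  have hlittle := isLittleO_sSup_abs_div_sub_rpow (Q := fun s => Finv (1 - 1 / s))
    (by positivity) hκ0 hκ1 hκα hc.ne' hδ hQ
  simp only [one_div_div] at hlittle
  refine hlittle.tendsto_div_nhds_zero.congr' ?_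
  filter_upwards [eventually_gt_atTop 0] with t ht
  rw [Real.rpow_neg ht.le, div_inv_eq_mul, mul_comm]

/-- If `F⁻(1-1/t) = c t^{1/α}(1 + o(t^{-κ(1+1/α)}))` with `c > 0`, then
`t^κ · sup_{t^{-κ} ≤ λ ≤ t^κ} |F⁻(1-λ/t)/F⁻(1-1/t) - λ^{-1/α}| → 0` as `t → ∞`. -/
theorem stmt1 (F : ℝ → ℝ) (hF : Monotone F)
    (Finv : ℝ → ℝ) (hFinv : ∀ u, Finv u = sInf {x : ℝ | u ≤ F x})
    (α κ c : ℝ) (hα1 : 1 < α) (hα2 : α < 2)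
    (hκ0 : 0 < κ) (hκ1 : κ < 1) (hκ2 : κ < 2 / (α + 1)) (hc : 0 < c)
    (hyp : ∃ δ : ℝ → ℝ,
      (δ =o[atTop] fun t : ℝ => t ^ (-(κ * (1 + 1 / α)))) ∧
      ∀ᶠ t : ℝ in atTop, Finv (1 - 1 / t) = c * t ^ (1 / α) * (1 + δ t)) :
    Tendsto
      (fun t : ℝ => t ^ κ *
        sSup ((fun l : ℝ => |Finv (1 - l / t) / Finv (1 - 1 / t) - l ^ (-(1 / α))|) ''
          Icc (t ^ (-κ)) (t ^ κ)))
      atTop (nhds 0) :=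
  stmt1_general Finv α κ c hα1 hκ0 hκ1 hκ2 hc hyp
end

section
/- Let α ∈ (1,2), κ > 0 with κ < 1 and κ < 2/(α+1), c > 0, and suppose F is a continuous, strictly increasing distribution function. Then F⁻(1-1/t) = c·t^{1/α}·(1 + o(t^{-κ(1+1/α)})) as t → ∞ if and only if 1 - F(x) = (c/x)^α · (1 + o(x^{-κ(α+1)})) as x → ∞. -/
/-!
The quantile `t ↦ F⁻(1 - 1/t)` and `T x = (1 - F x)⁻¹` are mutually inverse: `F⁻(1 - 1/T x) = x`
and `F (F⁻(1 - 1/t)) = 1 - 1/t`. Substituting one expansion into this identity yields the other,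
with new error `(1 + old error)^α - 1` resp. `(1 + old error)^(1/α) - 1`, which is `O` of the old
error evaluated at `T x ≥ const · x^α` resp. at `F⁻(1 - 1/t) ≥ const · t^(1/α)`. The rates then
match because `κ (1 + 1/α) · α = κ (α + 1)`.
-/

open Filter Set Asymptotics Topology

lemma isBigO_one_add_rpow_sub_one {ι : Type*} {l : Filter ι} {η : ι → ℝ}
    (hη : Tendsto η l (𝓝 0)) (p : ℝ) : (fun i => (1 + η i) ^ p - 1) =O[l] η := by
  have hderiv := ((hasDerivAt_id (0 : ℝ)).const_add 1).rpow_const (p := p)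
    (Or.inl (by norm_num))
  simpa [Function.comp_def] using hderiv.isBigO_sub.comp_tendsto hη

lemma isBigO_rpow_neg_of_mul_rpow_le {φ : ℝ → ℝ} {k q b : ℝ} (hk : 0 < k) (hb : 0 ≤ b)
    (h : ∀ᶠ x in atTop, k * x ^ q ≤ φ x) :
    (fun x => φ x ^ (-b)) =O[atTop] fun x => x ^ (-(b * q)) := by
  refine IsBigO.of_bound (k ^ (-b)) ?_
  filter_upwards [h, eventually_gt_atTop 0] with x hx hx0
  have hkxq : 0 < k * x ^ q := mul_pos hk (Real.rpow_pos_of_pos hx0 q)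
  rw [Real.norm_of_nonneg (Real.rpow_nonneg (hkxq.trans_le hx).le _),
    Real.norm_of_nonneg (Real.rpow_nonneg hx0.le _)]
  calc φ x ^ (-b) ≤ (k * x ^ q) ^ (-b) := Real.rpow_le_rpow_of_nonpos hkxq hx (by linarith)
    _ = k ^ (-b) * x ^ (-(b * q)) := by
        rw [Real.mul_rpow hk.le (Real.rpow_nonneg hx0.le q), ← Real.rpow_mul hx0.le, mul_neg,
          mul_comm q]

lemma isLittleO_one_add_comp_rpow_sub_one {δ φ : ℝ → ℝ} {b a : ℝ} (hb : 0 < b)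
    (hδ : δ =o[atTop] fun s => s ^ (-b)) (hφ : Tendsto φ atTop atTop)
    (hφb : (fun x => φ x ^ (-b)) =O[atTop] fun x => x ^ (-a)) (p : ℝ) :
    (fun x => (1 + δ (φ x)) ^ p - 1) =o[atTop] fun x => x ^ (-a) := by
  have hδφ := (hδ.comp_tendsto hφ).trans_isBigO hφb
  have hδ0 := (hδ.isBigO.trans_tendsto (tendsto_rpow_neg_atTop hb)).comp hφ
  exact (isBigO_one_add_rpow_sub_one hδ0 p).trans_isLittleO hδφ

lemma inv_eq_div_rpow_mul_rpow_iff {x s c w α : ℝ} (hx : 0 < x) (hs : 0 < s) (hc : 0 < c)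
    (hw : 0 < w) (hα : α ≠ 0) :
    s⁻¹ = (c / x) ^ α * w ^ α ↔ x = c * s ^ (1 / α) * w := by
  have hcw : 0 < c * w := mul_pos hc hw
  have hx' : x = c * s ^ (1 / α) * w ↔ s ^ α⁻¹ = x / (c * w) := by
    rw [eq_div_iff hcw.ne', one_div]
    constructor <;> intro h <;> linarith
  have hcwx : (c / x * w)⁻¹ = x / (c * w) := by field_simp
  rw [hx', Real.rpow_inv_eq hs.le (by positivity) hα, ← Real.mul_rpow (div_pos hc hx).le hw.le,
    inv_eq_iff_eq_inv, ← Real.inv_rpow (by positivity), hcwx]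

section Quantile

variable {F Finv : ℝ → ℝ}

lemma eventually_lt_one_sub_one_div {a : ℝ} (ha : a < 1) : ∀ᶠ t in atTop, a < 1 - 1 / t := by
  filter_upwards [tendsto_inv_atTop_zero.eventually (gt_mem_nhds (sub_pos.2 ha))] with t ht
  rw [one_div]
  linarith

lemma apply_Finv_one_sub_one_div (hright : ∀ u ∈ Ioo (0 : ℝ) 1, F (Finv u) = u) {t : ℝ}
    (ht : 1 < t) : F (Finv (1 - 1 / t)) = 1 - 1 / t := by
  have ht1 : 1 / t < 1 := (div_lt_one (by linarith)).2 ht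
  have ht0 : 0 < 1 / t := by positivity
  exact hright _ ⟨by linarith, by linarith⟩

lemma tendsto_Finv_one_sub_one_div_atTop_iff (hmono : StrictMono F)
    (hright : ∀ u ∈ Ioo (0 : ℝ) 1, F (Finv u) = u) :
    Tendsto (fun t => Finv (1 - 1 / t)) atTop atTop ↔ ∀ x, F x < 1 := by
  constructor
  · intro h x
    obtain ⟨t, hxt, ht⟩ := ((h.eventually_gt_atTop x).and (eventually_gt_atTop 1)).exists
    have hFx := hmono hxt
    rw [apply_Finv_one_sub_one_div hright ht] at hFx
    have ht0 : 0 < 1 / t := by positivity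
    linarith
  · intro h
    refine tendsto_atTop.2 fun M => ?_
    filter_upwards [eventually_lt_one_sub_one_div (h M), eventually_gt_atTop 1] with t hM ht
    rw [← apply_Finv_one_sub_one_div hright ht] at hM
    exact (hmono.lt_iff_lt.1 hM).le

lemma tendsto_inv_one_sub_atTop (hmono : Monotone F)
    (hright : ∀ u ∈ Ioo (0 : ℝ) 1, F (Finv u) = u) (hlt : ∀ x, F x < 1) :
    Tendsto (fun x => (1 - F x)⁻¹) atTop atTop := by
  have hF : Tendsto F atTop (𝓝 1) := by
    refine tendsto_order.2
      ⟨fun a ha => ?_, fun a ha => Eventually.of_forall fun x => (hlt x).trans ha⟩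
    obtain ⟨t, hat, ht⟩ := ((eventually_lt_one_sub_one_div ha).and (eventually_gt_atTop 1)).exists
    filter_upwards [eventually_ge_atTop (Finv (1 - 1 / t))] with x hx
    exact hat.trans_le ((apply_Finv_one_sub_one_div hright ht).symm.trans_le (hmono hx))
  refine tendsto_inv_nhdsGT_zero.comp (tendsto_nhdsWithin_iff.2 ⟨?_, ?_⟩)
  · simpa using hF.const_sub 1
  · exact Eventually.of_forall fun x => sub_pos.2 (hlt x)

theorem tail_expansion_of_quantile_expansion (hmono : StrictMono F)
    (hleft : ∀ x, Finv (F x) = x) (hright : ∀ u ∈ Ioo (0 : ℝ) 1, F (Finv u) = u)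
    {α κ c : ℝ} (hα : 0 < α) (hκ : 0 < κ) (hc : 0 < c) {δ : ℝ → ℝ}
    (hδ : δ =o[atTop] fun t => t ^ (-(κ * (1 + 1 / α))))
    (hQ : ∀ᶠ t in atTop, Finv (1 - 1 / t) = c * t ^ (1 / α) * (1 + δ t)) :
    ∃ ε : ℝ → ℝ, (ε =o[atTop] fun x => x ^ (-(κ * (α + 1)))) ∧
      ∀ᶠ x in atTop, 1 - F x = (c / x) ^ α * (1 + ε x) := by
  have hb : 0 < κ * (1 + 1 / α) := by positivity
  have hδ0 : Tendsto δ atTop (𝓝 0) := hδ.isBigO.trans_tendsto (tendsto_rpow_neg_atTop hb)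
  have hQtop : Tendsto (fun t => Finv (1 - 1 / t)) atTop atTop := by
    refine (tendsto_congr' hQ).2 (Tendsto.atTop_mul_pos one_pos ?_ ?_)
    · exact (tendsto_rpow_atTop (by positivity)).const_mul_atTop hc
    · simpa using hδ0.const_add 1
  set T : ℝ → ℝ := fun x => (1 - F x)⁻¹ with hT_def
  have hT : Tendsto T atTop atTop := tendsto_inv_one_sub_atTop hmono.monotone hright
    ((tendsto_Finv_one_sub_one_div_atTop_iff hmono hright).1 hQtop)
  have hx_eq : ∀ᶠ x in atTop, x = c * T x ^ (1 / α) * (1 + δ (T x)) := by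
    filter_upwards [hT.eventually hQ] with x hx
    rwa [one_div (T x), inv_inv, sub_sub_cancel, hleft] at hx
  have hδT : ∀ᶠ x in atTop, 1 + δ (T x) ∈ Ioo (1 / 2 : ℝ) 2 :=
    hT.eventually ((hδ0.const_add 1).eventually (Ioo_mem_nhds (by norm_num) (by norm_num)))
  have hT_lower : ∀ᶠ x in atTop, ((2 * c) ^ α)⁻¹ * x ^ α ≤ T x := by
    filter_upwards [hx_eq, hδT, eventually_gt_atTop 0, hT.eventually (eventually_gt_atTop 0)]
      with x hx hδx hx0 hTx
    have hx2 : x / (2 * c) ≤ T x ^ α⁻¹ := by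
      rw [div_le_iff₀ (by positivity), ← one_div]
      nth_rewrite 1 [hx]
      have hTα := Real.rpow_pos_of_pos hTx (1 / α)
      nlinarith [mul_pos (mul_pos hc hTα) (sub_pos.2 hδx.2)]
    calc ((2 * c) ^ α)⁻¹ * x ^ α = (x / (2 * c)) ^ α := by
          rw [Real.div_rpow hx0.le (by positivity), div_eq_inv_mul]
      _ ≤ (T x ^ α⁻¹) ^ α := Real.rpow_le_rpow (by positivity) hx2 hα.le
      _ = T x := Real.rpow_inv_rpow hTx.le hα.ne'
  refine ⟨fun x => (1 + δ (T x)) ^ α - 1,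
    isLittleO_one_add_comp_rpow_sub_one hb hδ hT ?_ α, ?_⟩
  · have hexp : κ * (1 + 1 / α) * α = κ * (α + 1) := by field_simp
    simpa only [hexp] using isBigO_rpow_neg_of_mul_rpow_le (by positivity) hb.le hT_lower
  · filter_upwards [hx_eq, hδT, eventually_gt_atTop 0, hT.eventually (eventually_gt_atTop 0)]
      with x hx hδx hx0 hTx
    rw [add_sub_cancel, ← (inv_eq_div_rpow_mul_rpow_iff hx0 hTx hc
      (by linarith [hδx.1]) hα.ne').2 hx, hT_def, inv_inv]

theorem quantile_expansion_of_tail_expansion (hmono : StrictMono F)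
    (hright : ∀ u ∈ Ioo (0 : ℝ) 1, F (Finv u) = u)
    {α κ c : ℝ} (hα : 0 < α) (hκ : 0 < κ) (hc : 0 < c) {ε : ℝ → ℝ}
    (hε : ε =o[atTop] fun x => x ^ (-(κ * (α + 1))))
    (hG : ∀ᶠ x in atTop, 1 - F x = (c / x) ^ α * (1 + ε x)) :
    ∃ δ : ℝ → ℝ, (δ =o[atTop] fun t => t ^ (-(κ * (1 + 1 / α)))) ∧
      ∀ᶠ t in atTop, Finv (1 - 1 / t) = c * t ^ (1 / α) * (1 + δ t) := by
  have hb : 0 < κ * (α + 1) := by positivity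
  have hε0 : Tendsto ε atTop (𝓝 0) := hε.isBigO.trans_tendsto (tendsto_rpow_neg_atTop hb)
  have hεx : ∀ᶠ x in atTop, 1 + ε x ∈ Ioo (1 / 2 : ℝ) 2 :=
    (hε0.const_add 1).eventually (Ioo_mem_nhds (by norm_num) (by norm_num))
  have hFlt : ∀ x, F x < 1 := by
    obtain ⟨N, hN⟩ := eventually_atTop.1 (hG.and (hεx.and (eventually_gt_atTop 0)))
    intro x
    obtain ⟨hGy, hεy, hy0⟩ := hN (max x N) (le_max_right _ _)
    have hpos : 0 < 1 - F (max x N) :=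
      hGy ▸ mul_pos (Real.rpow_pos_of_pos (div_pos hc hy0) α) (by linarith [hεy.1])
    linarith [hmono.monotone (le_max_left x N)]
  set X : ℝ → ℝ := fun t => Finv (1 - 1 / t)
  have hX : Tendsto X atTop atTop := (tendsto_Finv_one_sub_one_div_atTop_iff hmono hright).2 hFlt
  have hX_eq : ∀ᶠ t in atTop, X t = c * t ^ (1 / α) * (1 + ε (X t)) ^ (1 / α) := by
    filter_upwards [hX.eventually hG, hX.eventually hεx, hX.eventually (eventually_gt_atTop 0),
      eventually_gt_atTop 1] with t hGt hεt hXt ht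
    have hεt0 : 0 < 1 + ε (X t) := by linarith [hεt.1]
    have hw : ((1 + ε (X t)) ^ (1 / α)) ^ α = 1 + ε (X t) := by
      rw [one_div]
      exact Real.rpow_inv_rpow hεt0.le hα.ne'
    rw [apply_Finv_one_sub_one_div hright ht, sub_sub_cancel, one_div t, ← hw] at hGt
    exact (inv_eq_div_rpow_mul_rpow_iff hXt (by linarith) hc
      (Real.rpow_pos_of_pos hεt0 _) hα.ne').1 hGt
  have hX_lower : ∀ᶠ t in atTop, c * (1 / 2) ^ (1 / α) * t ^ (1 / α) ≤ X t := by
    filter_upwards [hX_eq, hX.eventually hεx, eventually_gt_atTop 0] with t ht hεt ht0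
    rw [ht, mul_right_comm]
    gcongr
    exact hεt.1.le
  refine ⟨fun t => (1 + ε (X t)) ^ (1 / α) - 1,
    isLittleO_one_add_comp_rpow_sub_one hb hε hX ?_ (1 / α), ?_⟩
  · have hexp : κ * (α + 1) * (1 / α) = κ * (1 + 1 / α) := by field_simp
    simpa only [hexp] using isBigO_rpow_neg_of_mul_rpow_le (by positivity) hb.le hX_lower
  · filter_upwards [hX_eq] with t ht
    rwa [add_sub_cancel]

end Quantile

theorem stmt2_general (F : ℝ → ℝ) (hFmono : StrictMono F)
    (Finv : ℝ → ℝ)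
    (hFinv_left : ∀ x : ℝ, Finv (F x) = x)
    (hFinv_right : ∀ u ∈ Ioo (0 : ℝ) 1, F (Finv u) = u)
    (α κ c : ℝ) (hα1 : 1 < α)
    (hκ0 : 0 < κ) (hc : 0 < c) :
    (∃ δ : ℝ → ℝ,
      (δ =o[atTop] fun t : ℝ => t ^ (-(κ * (1 + 1 / α)))) ∧
      ∀ᶠ t : ℝ in atTop, Finv (1 - 1 / t) = c * t ^ (1 / α) * (1 + δ t)) ↔
    (∃ ε : ℝ → ℝ,
      (ε =o[atTop] fun x : ℝ => x ^ (-(κ * (α + 1)))) ∧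
      ∀ᶠ x : ℝ in atTop, 1 - F x = (c / x) ^ α * (1 + ε x)) := by
  have hα : 0 < α := by linarith
  constructor
  · rintro ⟨δ, hδ, hQ⟩
    exact tail_expansion_of_quantile_expansion hFmono hFinv_left hFinv_right hα hκ0 hc hδ hQ
  · rintro ⟨ε, hε, hG⟩
    exact quantile_expansion_of_tail_expansion hFmono hFinv_right hα hκ0 hc hε hG

/-- For a continuous strictly increasing distribution function `F` with
genuine inverse `F⁻`, `F⁻(1-1/t) = c t^{1/α}(1 + o(t^{-κ(1+1/α)}))` iff
`1 - F(x) = (c/x)^α (1 + o(x^{-κ(α+1)}))`. -/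
theorem stmt2 (F : ℝ → ℝ) (hFcont : Continuous F) (hFmono : StrictMono F)
    (Finv : ℝ → ℝ)
    (hFinv_left : ∀ x : ℝ, Finv (F x) = x)
    (hFinv_right : ∀ u ∈ Ioo (0 : ℝ) 1, F (Finv u) = u)
    (α κ c : ℝ) (hα1 : 1 < α) (hα2 : α < 2)
    (hκ0 : 0 < κ) (hκ1 : κ < 1) (hκ2 : κ < 2 / (α + 1)) (hc : 0 < c) :
    (∃ δ : ℝ → ℝ,
      (δ =o[atTop] fun t : ℝ => t ^ (-(κ * (1 + 1 / α)))) ∧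
      ∀ᶠ t : ℝ in atTop, Finv (1 - 1 / t) = c * t ^ (1 / α) * (1 + δ t)) ↔
    (∃ ε : ℝ → ℝ,
      (ε =o[atTop] fun x : ℝ => x ^ (-(κ * (α + 1)))) ∧
      ∀ᶠ x : ℝ in atTop, 1 - F x = (c / x) ^ α * (1 + ε x)) :=
  stmt2_general F hFmono Finv hFinv_left hFinv_right α κ c hα1 hκ0 hc
end

section
/- Let F be a distribution function on ℝ with finite mean zero such that the upper tail 1-F is regularly varying of index -α with α > 1. Then there exist distribution functions F_U and F_L and r ∈ (0,1) such that: (i) the support of F_U is bounded below and the support of F_L is bounded above; (ii) both F_U and F_L have mean zero; (iii) F = r·F_U + (1-r)·F_L. -/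
open Filter Set MeasureTheory

/-!
Since the mean vanishes and the upper tail is nowhere null, `∫_{(-∞,0]} x dμ < 0`, so some
`S = [-K, 0]` has `J = ∫_S x dμ < 0`; as the tail moments `∫_{(t,∞)} x dμ` tend to `0`, some
`t ≥ 0` gives `0 < m = ∫_{(t,∞)} x dμ < -J`. With `θ = m / (-J) ∈ (0, 1)` the measures
`μ|_(t,∞) + θ μ|_S` (living on `[-K, ∞)`) and `μ|_(-∞,t] \ S + (1 - θ) μ|_S` (living on
`(-∞, t]`) are both centered and add up to `μ`; normalising them gives `μU`, `μL` and `r`.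
-/

open scoped Topology

section Mixture

variable {α : Type*} [MeasurableSpace α]

theorem exists_eq_mixture_of_add_eq {μ ν₁ ν₂ : Measure α} [IsProbabilityMeasure μ]
    (h : ν₁ + ν₂ = μ) (h₁ : ν₁ ≠ 0) (h₂ : ν₂ ≠ 0) :
    ∃ r : ℝ, 0 < r ∧ r < 1 ∧
      IsProbabilityMeasure ((ν₁ univ)⁻¹ • ν₁) ∧ IsProbabilityMeasure ((ν₂ univ)⁻¹ • ν₂) ∧
      μ = ENNReal.ofReal r • (ν₁ univ)⁻¹ • ν₁ + ENNReal.ofReal (1 - r) • (ν₂ univ)⁻¹ • ν₂ := by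
  have : IsFiniteMeasure ν₁ := isFiniteMeasure_of_le μ (h ▸ Measure.le_add_right le_rfl)
  have : IsFiniteMeasure ν₂ := isFiniteMeasure_of_le μ (h ▸ Measure.le_add_left le_rfl)
  have : NeZero ν₁ := ⟨h₁⟩
  have : NeZero ν₂ := ⟨h₂⟩
  have hsum : (ν₁ univ).toReal + (ν₂ univ).toReal = 1 := by
    rw [← ENNReal.toReal_add (measure_ne_top _ _) (measure_ne_top _ _), ← Measure.add_apply, h,
      measure_univ, ENNReal.toReal_one]
  have hpos₁ := ENNReal.toReal_pos (Measure.measure_univ_ne_zero.2 h₁) (measure_ne_top ν₁ univ)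
  have hpos₂ := ENNReal.toReal_pos (Measure.measure_univ_ne_zero.2 h₂) (measure_ne_top ν₂ univ)
  refine ⟨(ν₁ univ).toReal, hpos₁, by linarith, inferInstance, inferInstance, ?_⟩
  rw [← eq_sub_of_add_eq' hsum, ENNReal.ofReal_toReal (measure_ne_top _ _),
    ENNReal.ofReal_toReal (measure_ne_top _ _), smul_smul, smul_smul,
    ENNReal.mul_inv_cancel (Measure.measure_univ_ne_zero.2 h₁) (measure_ne_top _ _),
    ENNReal.mul_inv_cancel (Measure.measure_univ_ne_zero.2 h₂) (measure_ne_top _ _), one_smul,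
    one_smul, h]

end Mixture

section Split

variable {α : Type*} [MeasurableSpace α] {μ : Measure α} {f : α → ℝ} {A S : Set α} {θ : ℝ}

theorem restrict_add_smul_add_restrict_add_smul (hA : MeasurableSet A) (hS : MeasurableSet S)
    (hAS : Disjoint A S) (hθ₀ : 0 ≤ θ) (hθ₁ : θ ≤ 1) :
    (μ.restrict A + ENNReal.ofReal θ • μ.restrict S) +
      (μ.restrict (A ∪ S)ᶜ + ENNReal.ofReal (1 - θ) • μ.restrict S) = μ := by
  have hθ : ENNReal.ofReal θ + ENNReal.ofReal (1 - θ) = 1 := by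
    rw [← ENNReal.ofReal_add hθ₀ (by linarith), add_sub_cancel, ENNReal.ofReal_one]
  rw [add_add_add_comm, ← add_smul, hθ, one_smul, add_right_comm, ← Measure.restrict_union hAS hS,
    ← Measure.restrict_union disjoint_compl_right (hA.union hS).compl, union_compl_self,
    Measure.restrict_univ]

theorem integral_restrict_add_smul_restrict (hf : Integrable f μ) (hθ : 0 ≤ θ) :
    ∫ x, f x ∂(μ.restrict A + ENNReal.ofReal θ • μ.restrict S) =
      ∫ x in A, f x ∂μ + θ * ∫ x in S, f x ∂μ := by
  rw [integral_add_measure hf.restrict (hf.restrict.smul_measure ENNReal.ofReal_ne_top),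
    integral_smul_measure, ENNReal.toReal_ofReal hθ, smul_eq_mul]

theorem restrict_ne_zero_of_setIntegral_ne_zero (h : ∫ x in A, f x ∂μ ≠ 0) : μ.restrict A ≠ 0 :=
  fun h0 => h (by rw [h0, integral_zero_measure])

theorem exists_centered_split_of_setIntegral_lt (hf : Integrable f μ) (hcent : ∫ x, f x ∂μ = 0)
    (hA : MeasurableSet A) (hS : MeasurableSet S) (hAS : Disjoint A S)
    (hpos : 0 < ∫ x in A, f x ∂μ) (hlt : ∫ x in A, f x ∂μ < -∫ x in S, f x ∂μ) :
    ∃ ν₁ ν₂ : Measure α, ν₁ + ν₂ = μ ∧ ν₁ ≠ 0 ∧ ν₂ ≠ 0 ∧ ν₁ (A ∪ S)ᶜ = 0 ∧ ν₂ A = 0 ∧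
      ∫ x, f x ∂ν₁ = 0 ∧ ∫ x, f x ∂ν₂ = 0 := by
  set a := ∫ x in A, f x ∂μ
  set s := ∫ x in S, f x ∂μ
  set θ := a / -s
  have hs : 0 < -s := hpos.trans hlt
  have hθ₀ : 0 < θ := div_pos hpos hs
  have hθ₁ : θ < 1 := (div_lt_one hs).2 hlt
  have hθs : θ * s = -a := by rw [div_mul_eq_mul_div, div_eq_iff hs.ne']; ring
  have hrest : ∫ x in (A ∪ S)ᶜ, f x ∂μ = -a - s := by
    have := integral_add_compl (hA.union hS) hf
    rw [hcent, setIntegral_union hAS hS hf.integrableOn hf.integrableOn] at this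
    linarith
  refine ⟨_, _, restrict_add_smul_add_restrict_add_smul hA hS hAS hθ₀.le hθ₁.le, ?_, ?_, ?_, ?_,
    ?_, ?_⟩
  · exact fun h => restrict_ne_zero_of_setIntegral_ne_zero hpos.ne'
      (le_antisymm (h ▸ Measure.le_add_right le_rfl) (Measure.zero_le _))
  · refine fun h => (Measure.ennreal_smul_eq_zero.1 ?_).elim
      (ENNReal.ofReal_pos.2 (sub_pos.2 hθ₁)).ne'
      (restrict_ne_zero_of_setIntegral_ne_zero (neg_pos.1 hs).ne)
    exact le_antisymm (h ▸ Measure.le_add_left le_rfl) (Measure.zero_le _)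
  · rw [Measure.add_apply, Measure.smul_apply, Measure.restrict_apply (hA.union hS).compl,
      Measure.restrict_apply (hA.union hS).compl,
      (disjoint_compl_left.mono_right subset_union_left).inter_eq,
      (disjoint_compl_left.mono_right subset_union_right).inter_eq]
    simp
  · rw [Measure.add_apply, Measure.smul_apply, Measure.restrict_apply hA, Measure.restrict_apply hA,
      (disjoint_compl_right.mono_left subset_union_left).inter_eq, hAS.inter_eq]
    simp
  · rw [integral_restrict_add_smul_restrict hf hθ₀.le, hθs]; ring
  · rw [integral_restrict_add_smul_restrict hf (by linarith), hrest]; linear_combination -hθs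

end Split

section Real

variable {μ : Measure ℝ}

theorem measure_Ioi_pos_of_toReal_Iic_lt_one [IsProbabilityMeasure μ] {x : ℝ}
    (h : 0 < 1 - (μ (Iic x)).toReal) : 0 < μ (Ioi x) := by
  refine pos_iff_ne_zero.2 fun h0 => ?_
  rw [← compl_Iic, prob_compl_eq_zero_iff measurableSet_Iic] at h0
  simp [h0] at h

theorem setIntegral_Ioi_id_pos {t : ℝ} (ht : 0 ≤ t) (hint : IntegrableOn (fun x => x) (Ioi t) μ)
    (hμ : 0 < μ (Ioi t)) : 0 < ∫ x in Ioi t, x ∂μ := by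
  have hsupp : Function.support (fun x : ℝ => x) ∩ Ioi t = Ioi t :=
    inter_eq_right.2 fun x hx => (ht.trans_lt hx).ne'
  rwa [setIntegral_pos_iff_support_of_nonneg_ae ((ae_restrict_iff' measurableSet_Ioi).2
    (.of_forall fun x hx => ht.trans (le_of_lt hx))) hint, hsupp]

theorem tendsto_setIntegral_Icc_neg_atTop {E : Type*} [NormedAddCommGroup E] [NormedSpace ℝ E]
    {f : ℝ → E} {b : ℝ} (hf : IntegrableOn f (Iic b) μ) :
    Tendsto (fun K => ∫ x in Icc (-K) b, f x ∂μ) atTop (𝓝 (∫ x in Iic b, f x ∂μ)) := by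
  have hunion : ⋃ K : ℝ, Icc (-K) b = Iic b := by
    ext x
    simpa using fun _ => ⟨-x, by simp⟩
  rw [← hunion] at hf ⊢
  exact tendsto_setIntegral_of_monotone (fun _ => measurableSet_Icc)
    (fun _ _ h => Icc_subset_Icc_left (neg_le_neg h)) hf

theorem tendsto_setIntegral_Ioi_atTop {E : Type*} [NormedAddCommGroup E] [NormedSpace ℝ E]
    {f : ℝ → E} (hf : Integrable f μ) :
    Tendsto (fun t => ∫ x in Ioi t, f x ∂μ) atTop (𝓝 0) := by
  have hinter : ⋂ t : ℝ, Ioi t = ∅ := by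
    ext x
    simpa using ⟨x, le_rfl⟩
  simpa [hinter] using tendsto_setIntegral_of_antitone (fun _ => measurableSet_Ioi)
    (fun _ _ h => Ioi_subset_Ioi h) ⟨0, hf.integrableOn⟩

theorem exists_centered_split_Iio_Ioi_null (hint : Integrable (fun x => x) μ)
    (hcent : ∫ x, x ∂μ = 0) (htail : ∀ x, 0 < μ (Ioi x)) :
    ∃ (ν₁ ν₂ : Measure ℝ) (a b : ℝ), ν₁ + ν₂ = μ ∧ ν₁ ≠ 0 ∧ ν₂ ≠ 0 ∧
      ν₁ (Iio a) = 0 ∧ ν₂ (Ioi b) = 0 ∧ ∫ x, x ∂ν₁ = 0 ∧ ∫ x, x ∂ν₂ = 0 := by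
  have hneg : ∫ x in Iic 0, x ∂μ < 0 := by
    have := integral_add_compl measurableSet_Iic hint (s := Iic 0)
    rw [compl_Iic, hcent] at this
    linarith [setIntegral_Ioi_id_pos le_rfl hint.integrableOn (htail 0)]
  obtain ⟨K, hJ, hK⟩ := (((tendsto_setIntegral_Icc_neg_atTop hint.integrableOn).eventually
    (gt_mem_nhds hneg)).and (eventually_ge_atTop 0)).exists
  obtain ⟨t, hm, ht⟩ := (((tendsto_setIntegral_Ioi_atTop hint).eventually
    (gt_mem_nhds (neg_pos.2 hJ))).and (eventually_ge_atTop 0)).exists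
  have hdisj : Disjoint (Ioi t) (Icc (-K) 0) :=
    disjoint_left.2 fun x hxt hxK => (ht.trans_lt hxt).not_ge hxK.2
  obtain ⟨ν₁, ν₂, hsum, h₁, h₂, hnull₁, hnull₂, hcent₁, hcent₂⟩ :=
    exists_centered_split_of_setIntegral_lt hint hcent measurableSet_Ioi measurableSet_Icc hdisj
      (setIntegral_Ioi_id_pos ht hint.integrableOn (htail t)) hm
  refine ⟨ν₁, ν₂, -K, t, hsum, h₁, h₂, measure_mono_null ?_ hnull₁, hnull₂, hcent₁, hcent₂⟩
  intro x hx
  simp only [mem_Iio] at hx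
  simp only [compl_union, mem_inter_iff, mem_compl_iff, mem_Ioi, mem_Icc, not_lt, not_and, not_le]
  exact ⟨by linarith, fun h => absurd h hx.not_ge⟩

end Real

theorem stmt6_general (μ : Measure ℝ) [IsProbabilityMeasure μ]
    (hint : Integrable (fun x : ℝ => x) μ)
    (hcent : ∫ x, x ∂μ = 0)
    (htailpos : ∀ x : ℝ, 0 < 1 - (μ (Iic x)).toReal) :
    ∃ (μU μL : Measure ℝ) (r : ℝ),
      IsProbabilityMeasure μU ∧ IsProbabilityMeasure μL ∧
      0 < r ∧ r < 1 ∧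
      (∃ a : ℝ, μU (Iio a) = 0) ∧
      (∃ b : ℝ, μL (Ioi b) = 0) ∧
      Integrable (fun x : ℝ => x) μU ∧ (∫ x, x ∂μU) = 0 ∧
      Integrable (fun x : ℝ => x) μL ∧ (∫ x, x ∂μL) = 0 ∧
      μ = ENNReal.ofReal r • μU + ENNReal.ofReal (1 - r) • μL := by
  obtain ⟨ν₁, ν₂, a, b, hsum, h₁, h₂, hnull₁, hnull₂, hcent₁, hcent₂⟩ :=
    exists_centered_split_Iio_Ioi_null hint hcent
      fun x => measure_Ioi_pos_of_toReal_Iic_lt_one (htailpos x)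
  obtain ⟨r, hr₀, hr₁, hP₁, hP₂, hmix⟩ := exists_eq_mixture_of_add_eq hsum h₁ h₂
  have hint₁ : Integrable (fun x : ℝ => x) ν₁ :=
    hint.mono_measure (hsum ▸ Measure.le_add_right le_rfl)
  have hint₂ : Integrable (fun x : ℝ => x) ν₂ :=
    hint.mono_measure (hsum ▸ Measure.le_add_left le_rfl)
  refine ⟨_, _, r, hP₁, hP₂, hr₀, hr₁, ⟨a, by simp [hnull₁]⟩, ⟨b, by simp [hnull₂]⟩,
    hint₁.smul_measure ?_, by simp [integral_smul_measure, hcent₁],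
    hint₂.smul_measure ?_, by simp [integral_smul_measure, hcent₂], hmix⟩
  · simpa using Measure.measure_univ_ne_zero.2 h₁
  · simpa using Measure.measure_univ_ne_zero.2 h₂

/-- A centered distribution with regularly varying upper tail of index `-α`,
`α > 1`, decomposes as `F = r F_U + (1-r) F_L` with `F_U` centered and supported on a
half-line bounded below, `F_L` centered and supported on a half-line bounded above. -/
theorem stmt6 (μ : Measure ℝ) [IsProbabilityMeasure μ]
    (hint : Integrable (fun x : ℝ => x) μ)
    (hcent : ∫ x, x ∂μ = 0)
    (α : ℝ) (hα : 1 < α)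
    (htailpos : ∀ x : ℝ, 0 < 1 - (μ (Iic x)).toReal)
    (hRV : ∀ l : ℝ, 0 < l →
      Tendsto (fun x : ℝ => (1 - (μ (Iic (l * x))).toReal) / (1 - (μ (Iic x)).toReal))
        atTop (nhds (l ^ (-α)))) :
    ∃ (μU μL : Measure ℝ) (r : ℝ),
      IsProbabilityMeasure μU ∧ IsProbabilityMeasure μL ∧
      0 < r ∧ r < 1 ∧
      (∃ a : ℝ, μU (Iio a) = 0) ∧
      (∃ b : ℝ, μL (Ioi b) = 0) ∧
      Integrable (fun x : ℝ => x) μU ∧ (∫ x, x ∂μU) = 0 ∧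
      Integrable (fun x : ℝ => x) μL ∧ (∫ x, x ∂μL) = 0 ∧
      μ = ENNReal.ofReal r • μU + ENNReal.ofReal (1 - r) • μL :=
  stmt6_general μ hint hcent htailpos
end

section
/- Let Π be a Poisson random measure on a σ-finite measure space with intensity μ, and let f ∈ ⋂_{2≤q≤p} L^q(μ) for an integer p ≥ 2, with ∫f dμ-compensation well-defined. Define M_k = E[(∫f d(Π - μ))^k] for integers 0 ≤ k ≤ p. Suppose the moment recursion M_p = Σ_{0≤k≤p-2} C(p-1,k)·(∫ f^{p-k} dμ)·M_k holds, and suppose |∫f^j dμ| ≤ C·t^{j·a}·m^{1-j/α} for all 2 ≤ j ≤ p, constants C, t, m > 0, a ∈ ℝ, α ∈ (1,2). Then there exist constants c_k (depending only on k, C, α) such that |M_k| ≤ c_k·t^{k·a}·m^{-k/α + ⌊k/2⌋} for all 0 ≤ k ≤ p, provided m ≥ 1. -/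
/-!
Bound each moment through the recursion: in the term `C(q-1,k) A_{q-k} M_k` the powers of
`t` combine to `t^{qa}` and the powers of `m` to `m^{1 - q/α + ⌊k/2⌋}`, and since `k ≤ q - 2`
gives `⌊k/2⌋ + 1 ≤ ⌊q/2⌋`, this is at most `m^{-q/α + ⌊q/2⌋}` when `m ≥ 1`. The constants
therefore obey the same recursion as the moments, with every `A_j` replaced by `C`.
-/

open Finset

noncomputable def momentConst (C : ℝ) : ℕ → ℝ
  | 0 => 1
  | 1 => 0
  | n + 2 => ∑ k : Fin (n + 1), (Nat.choose (n + 1) k : ℝ) * C * momentConst C k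

theorem momentConst_add_two (C : ℝ) (n : ℕ) :
    momentConst C (n + 2) =
      ∑ k ∈ range (n + 1), (Nat.choose (n + 1) k : ℝ) * C * momentConst C k := by
  rw [momentConst,
    Fin.sum_univ_eq_sum_range (fun k => (Nat.choose (n + 1) k : ℝ) * C * momentConst C k)]

theorem momentConst_nonneg {C : ℝ} (hC : 0 ≤ C) (n : ℕ) : 0 ≤ momentConst C n := by
  induction n using Nat.strong_induction_on with
  | _ n ih =>
    match n with
    | 0 => simp [momentConst]
    | 1 => simp [momentConst]
    | n + 2 =>
      rw [momentConst_add_two]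
      exact sum_nonneg fun k hk => by
        have := ih k (by have := mem_range.mp hk; omega)
        positivity

theorem abs_le_momentConst_mul_of_recursion {C : ℝ} (hC : 0 ≤ C) {p : ℕ} {M A w : ℕ → ℝ}
    (hM0 : M 0 = 1) (hM1 : M 1 = 0) (hw0 : 1 ≤ w 0)
    (hrec : ∀ q, 2 ≤ q → q ≤ p →
      M q = ∑ k ∈ range (q - 1), (Nat.choose (q - 1) k : ℝ) * A (q - k) * M k)
    (hA : ∀ q k, k + 2 ≤ q → q ≤ p → |A (q - k)| * w k ≤ C * w q) :
    ∀ k ≤ p, |M k| ≤ momentConst C k * w k := by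
  intro k
  induction k using Nat.strong_induction_on with
  | _ k ih =>
    match k with
    | 0 => intro; simpa [momentConst, hM0] using hw0
    | 1 => intro; simp [momentConst, hM1]
    | n + 2 =>
      intro hn
      rw [hrec (n + 2) (by omega) hn, show n + 2 - 1 = n + 1 by omega, momentConst_add_two,
        sum_mul]
      refine (abs_sum_le_sum_abs _ _).trans (sum_le_sum fun j hj => ?_)
      have hjn : j + 2 ≤ n + 2 := by have := mem_range.mp hj; omega
      have hc := momentConst_nonneg hC j
      calc |(Nat.choose (n + 1) j : ℝ) * A (n + 2 - j) * M j|
          = (Nat.choose (n + 1) j : ℝ) * |A (n + 2 - j)| * |M j| := by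
            rw [abs_mul, abs_mul, Nat.abs_cast]
        _ ≤ (Nat.choose (n + 1) j : ℝ) * |A (n + 2 - j)| * (momentConst C j * w j) := by
            gcongr
            exact ih j (by omega) (by omega)
        _ = (Nat.choose (n + 1) j : ℝ) * momentConst C j * (|A (n + 2 - j)| * w j) := by ring
        _ ≤ (Nat.choose (n + 1) j : ℝ) * momentConst C j * (C * w (n + 2)) := by
            exact mul_le_mul_of_nonneg_left (hA (n + 2) j hjn hn) (by positivity)
        _ = (Nat.choose (n + 1) j : ℝ) * C * momentConst C j * w (n + 2) := by ring

noncomputable def momentWeight (t m a α : ℝ) (k : ℕ) : ℝ :=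
  t ^ ((k : ℝ) * a) * m ^ (-((k : ℝ) / α) + ((k / 2 : ℕ) : ℝ))

theorem rpow_mul_momentWeight_le {t m : ℝ} (ht : 0 < t) (hm : 1 ≤ m) (a α : ℝ) {q k : ℕ}
    (hkq : k + 2 ≤ q) :
    t ^ (((q - k : ℕ) : ℝ) * a) * m ^ (1 - ((q - k : ℕ) : ℝ) / α) *
      momentWeight t m a α k ≤ momentWeight t m a α q := by
  have hm0 : 0 < m := one_pos.trans_le hm
  have hfloor : ((k / 2 : ℕ) : ℝ) + 1 ≤ ((q / 2 : ℕ) : ℝ) := by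
    exact_mod_cast (by omega : k / 2 + 1 ≤ q / 2)
  rw [momentWeight, momentWeight, Nat.cast_sub (by omega)]
  calc t ^ (((q : ℝ) - k) * a) * m ^ (1 - ((q : ℝ) - k) / α) *
        (t ^ ((k : ℝ) * a) * m ^ (-((k : ℝ) / α) + ((k / 2 : ℕ) : ℝ)))
      = t ^ ((q : ℝ) * a) * m ^ (1 - (q : ℝ) / α + ((k / 2 : ℕ) : ℝ)) := by
        rw [mul_mul_mul_comm, ← Real.rpow_add ht, ← Real.rpow_add hm0]
        ring_nf
    _ ≤ t ^ ((q : ℝ) * a) * m ^ (-((q : ℝ) / α) + ((q / 2 : ℕ) : ℝ)) :=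
        mul_le_mul_of_nonneg_left (Real.rpow_le_rpow_of_exponent_le hm (by linarith))
          (by positivity)

theorem stmt17_general (C α : ℝ) (hC : 0 < C) :
    ∃ c : ℕ → ℝ, ∀ (p : ℕ), 2 ≤ p →
      ∀ (t m a : ℝ), 0 < t → 1 ≤ m →
      ∀ (M A : ℕ → ℝ), M 0 = 1 → M 1 = 0 →
      (∀ q : ℕ, 2 ≤ q → q ≤ p →
        M q = ∑ k ∈ Finset.range (q - 1), (Nat.choose (q - 1) k : ℝ) * A (q - k) * M k) →
      (∀ j : ℕ, 2 ≤ j → j ≤ p →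
        |A j| ≤ C * t ^ ((j : ℝ) * a) * m ^ (1 - (j : ℝ) / α)) →
      ∀ k : ℕ, k ≤ p →
        |M k| ≤ c k * t ^ ((k : ℝ) * a) * m ^ (-((k : ℝ) / α) + ((k / 2 : ℕ) : ℝ)) := by
  refine ⟨momentConst C, fun p _ t m a ht hm M A hM0 hM1 hrec hA k hk => ?_⟩
  rw [mul_assoc]
  refine abs_le_momentConst_mul_of_recursion (w := momentWeight t m a α) hC.le hM0 hM1
    (by simp [momentWeight]) hrec (fun q j hjq hq => ?_) k hk
  calc |A (q - j)| * momentWeight t m a α j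
      ≤ C * (t ^ (((q - j : ℕ) : ℝ) * a) * m ^ (1 - ((q - j : ℕ) : ℝ) / α) *
          momentWeight t m a α j) := by
        rw [← mul_assoc, ← mul_assoc]
        gcongr
        · unfold momentWeight; positivity
        exact hA (q - j) (by omega) (by omega)
    _ ≤ C * momentWeight t m a α q :=
        mul_le_mul_of_nonneg_left (rpow_mul_momentWeight_le ht hm a α hjq) hC.le

/-- moment bounds from Privault's recursion. There are constants `c_k`
depending only on `k`, `C` and `α` such that whenever `M_0 = 1`, `M_1 = 0`, the moments
satisfy the recursion `M_q = Σ_{0≤k≤q-2} C(q-1,k) A_{q-k} M_k` for `2 ≤ q ≤ p`, and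
`|A_j| ≤ C t^{ja} m^{1-j/α}` for `2 ≤ j ≤ p`, one has
`|M_k| ≤ c_k t^{ka} m^{-k/α+⌊k/2⌋}` for all `0 ≤ k ≤ p` (provided `m ≥ 1`). -/
theorem stmt17 (C α : ℝ) (hC : 0 < C) (hα1 : 1 < α) (hα2 : α < 2) :
    ∃ c : ℕ → ℝ, ∀ (p : ℕ), 2 ≤ p →
      ∀ (t m a : ℝ), 0 < t → 1 ≤ m →
      ∀ (M A : ℕ → ℝ), M 0 = 1 → M 1 = 0 →
      (∀ q : ℕ, 2 ≤ q → q ≤ p →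
        M q = ∑ k ∈ Finset.range (q - 1), (Nat.choose (q - 1) k : ℝ) * A (q - k) * M k) →
      (∀ j : ℕ, 2 ≤ j → j ≤ p →
        |A j| ≤ C * t ^ ((j : ℝ) * a) * m ^ (1 - (j : ℝ) / α)) →
      ∀ k : ℕ, k ≤ p →
        |M k| ≤ c k * t ^ ((k : ℝ) * a) * m ^ (-((k : ℝ) / α) + ((k / 2 : ℕ) : ℝ)) :=
  stmt17_general C α hC
end
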